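/- (Dyson–Hunt–Kac formula) For any real numbers x_1,…,x_n, ∑_{σ ∈ S_n} M(0, x_{σ(1)}, …, x_{σ(n)}) = ∑_{k=1}^{n} (1/k) ∑_{σ ∈ S_n} max(0, x_{σ(1)} + ⋯ + x_{σ(k)}), where M(y_0, y_1, …, y_n) = max over 0 ≤ j ≤ n of (y_0 + y_1 + ⋯ + y_j). -/

import Mathlib

/-!
Write `M_m` for the maximum of the partial sums `S_0 = 0, S_1, …, S_m`; the left-hand side
telescopes as `∑_σ ∑_{k=1}^n (M_k - M_{k-1})`. Kac's cyclic lemma says that summing `M_k - M_{k-1}`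
over the `k` cyclic rotations of `y_1, …, y_k` gives `max(0, S_k)`: extend `y` periodically and let
`W_r = max(S_r, …, S_{r+k-1})`; the rotation starting at `r` contributes `max(W_r, S_{r+k}) - W_r`,
which vanishes when `S_k ≤ 0` and equals `W_{r+1} - W_r` when `S_k > 0`, and these telescope to
`W_k - W_0 = S_k`. Rotating the first `k` entries of `σ` is right multiplication by a power of
`Fin.cycleRange`, so averaging Kac's lemma over `S_n` gives
`∑_σ max(0, S_k(σ)) = k ∑_σ (M_k(σ) - M_{k-1}(σ))`.
-/

open Finset Function Equiv

section RunningMax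

variable {α : Type*} [SemilatticeSup α]

def runningMax (s : ℕ → α) (m : ℕ) : α := (range (m + 1)).sup' nonempty_range_add_one s

lemma le_runningMax (s : ℕ → α) {j m : ℕ} (h : j ≤ m) : s j ≤ runningMax s m :=
  le_sup' s (mem_range.2 (Nat.lt_succ_of_le h))

lemma runningMax_zero (s : ℕ → α) : runningMax s 0 = s 0 := by
  simp [runningMax]

lemma runningMax_congr {s t : ℕ → α} {m : ℕ} (h : ∀ j ≤ m, s j = t j) :
    runningMax s m = runningMax t m :=
  sup'_congr _ rfl fun j hj => h j (Nat.lt_succ_iff.1 (mem_range.1 hj))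

lemma runningMax_succ (s : ℕ → α) (m : ℕ) :
    runningMax s (m + 1) = s (m + 1) ⊔ runningMax s m :=
  (sup'_congr _ range_add_one fun _ _ => rfl).trans (sup'_insert _ _)

lemma runningMax_succ' (s : ℕ → α) (m : ℕ) :
    runningMax s (m + 1) = s 0 ⊔ runningMax (fun j => s (j + 1)) m :=
  (sup'_congr _ (range_add_one' _) fun _ _ => rfl).trans
    ((sup'_insert _ _).trans (congrArg _ (sup'_map _ (by simp))))

lemma runningMax_eq_add_sum_sub [AddCommGroup α] (s : ℕ → α) (m : ℕ) :
    runningMax s m = s 0 + ∑ j ∈ range m, (runningMax s (j + 1) - runningMax s j) := by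
  rw [sum_range_sub, runningMax_zero, add_sub_cancel]

end RunningMax

section PartialSum

variable {G : Type*} [AddCommGroup G]

def partialSum (z : ℕ → G) (j : ℕ) : G := ∑ i ∈ range j, z i

lemma partialSum_shift (z : ℕ → G) (r j : ℕ) :
    partialSum (fun i => z (r + i)) j = partialSum z (r + j) - partialSum z r := by
  rw [partialSum, partialSum, sum_range_add, partialSum, add_sub_cancel_left]

lemma Function.Periodic.partialSum_add_period {z : ℕ → G} {c : ℕ} (hz : Periodic z c) (j : ℕ) :
    partialSum z (j + c) = partialSum z j + partialSum z c := by
  rw [add_comm j, partialSum, sum_range_add, add_comm]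
  simp only [partialSum, add_comm c, hz _]

variable [LinearOrder G]

def windowMax (z : ℕ → G) (m r : ℕ) : G := runningMax (fun j => partialSum z (r + j)) m

lemma partialSum_le_windowMax (z : ℕ → G) {j m : ℕ} (r : ℕ) (h : j ≤ m) :
    partialSum z (r + j) ≤ windowMax z m r :=
  le_runningMax (fun j => partialSum z (r + j)) h

variable [IsOrderedAddMonoid G]

lemma runningMax_add_const (s : ℕ → G) (c : G) (m : ℕ) :
    runningMax (fun j => s j + c) m = runningMax s m + c :=
  (sup'_add _ s c _).symm

lemma runningMax_partialSum_shift (z : ℕ → G) (r m : ℕ) :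
    runningMax (partialSum fun i => z (r + i)) m = windowMax z m r - partialSum z r := by
  rw [windowMax, sub_eq_add_neg, ← runningMax_add_const]
  exact runningMax_congr fun j _ => by rw [partialSum_shift, sub_eq_add_neg]

variable {p : ℕ → G} {m : ℕ}

lemma Function.Periodic.windowMax_succ_of_nonpos (hp : Periodic p (m + 1))
    (hS : partialSum p (m + 1) ≤ 0) (r : ℕ) : windowMax p (m + 1) r = windowMax p m r := by
  rw [windowMax, runningMax_succ, windowMax]
  refine max_eq_right ?_
  rw [hp.partialSum_add_period]
  exact add_le_of_le_of_nonpos (partialSum_le_windowMax p r (Nat.zero_le m)) hS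

lemma Function.Periodic.windowMax_succ_of_pos (hp : Periodic p (m + 1))
    (hS : 0 < partialSum p (m + 1)) (r : ℕ) : windowMax p (m + 1) r = windowMax p m (r + 1) := by
  have hshift : (fun j => partialSum p (r + (j + 1))) = fun j => partialSum p (r + 1 + j) := by
    simp only [add_comm, add_left_comm]
  rw [windowMax, runningMax_succ', hshift, add_zero]
  refine max_eq_right (le_of_lt ?_)
  calc partialSum p r < partialSum p (r + (m + 1)) := by
        rw [hp.partialSum_add_period]; exact lt_add_of_pos_right _ hS
    _ = partialSum p (r + 1 + m) := by congr 1; omega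
    _ ≤ windowMax p m (r + 1) := partialSum_le_windowMax p (r + 1) le_rfl

theorem Function.Periodic.sum_runningMax_partialSum_shift_succ_sub (hp : Periodic p (m + 1)) :
    ∑ r ∈ range (m + 1), (runningMax (partialSum fun i => p (r + i)) (m + 1)
      - runningMax (partialSum fun i => p (r + i)) m) = max 0 (partialSum p (m + 1)) := by
  simp only [runningMax_partialSum_shift, sub_sub_sub_cancel_right]
  rcases le_or_gt (partialSum p (m + 1)) 0 with hS | hS
  · simp only [hp.windowMax_succ_of_nonpos hS, sub_self, sum_const_zero, max_eq_left hS]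
  · have hperiod : windowMax p m (m + 1) = windowMax p m 0 + partialSum p (m + 1) := by
      simp only [windowMax, add_comm (m + 1), hp.partialSum_add_period, runningMax_add_const,
        zero_add]
    rw [sum_congr rfl fun r _ => by rw [hp.windowMax_succ_of_pos hS r], sum_range_sub, hperiod,
      add_sub_cancel_left, max_eq_right hS.le]

end PartialSum

section Permutations

variable {n : ℕ}

lemma Fin.coe_cycleRange_pow_of_le {i j : Fin n} (h : j ≤ i) (r : ℕ) :
    ((Fin.cycleRange i ^ r) j : ℕ) = (j + r) % (i + 1) := by
  induction r with
  | zero => exact (Nat.mod_eq_of_lt (Nat.lt_succ_of_le h)).symm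
  | succ r ih =>
    have hle : (Fin.cycleRange i ^ r) j ≤ i := by
      rw [Fin.le_def, ih]; exact Nat.lt_succ_iff.1 (Nat.mod_lt _ (Nat.succ_pos _))
    rw [pow_succ', Perm.mul_apply, coe_cycleRange_of_le hle, ← add_assoc, ← Nat.mod_add_mod, ← ih]
    split_ifs with heq
    · rw [heq, Nat.mod_self]
    · exact (Nat.mod_eq_of_lt (Nat.succ_lt_succ (Fin.lt_def.1 (lt_of_le_of_ne hle heq)))).symm

variable {α G : Type*}

def cyclicPrefix (f : Fin n → α) (i : Fin n) (l : ℕ) : α :=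
  f ⟨l % (i + 1), (Nat.mod_lt _ (Nat.succ_pos _)).trans_le i.2⟩

lemma periodic_cyclicPrefix (f : Fin n → α) (i : Fin n) : Periodic (cyclicPrefix f i) (i + 1) :=
  fun l => by simp only [cyclicPrefix, Nat.add_mod_right]

lemma comp_cycleRange_pow_apply (f : Fin n → α) {i j : Fin n} (h : j ≤ i) (r : ℕ) :
    (f ∘ (Fin.cycleRange i ^ r)) j = cyclicPrefix f i (r + j) :=
  congrArg f (Fin.ext (by rw [Fin.coe_cycleRange_pow_of_le h, add_comm]))

variable [AddCommGroup G]

def prefixSum (f : Fin n → G) (j : ℕ) : G :=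
  ∑ i ∈ univ.filter (fun i : Fin n => (i : ℕ) < j), f i

lemma prefixSum_zero (f : Fin n → G) : prefixSum f 0 = 0 := by
  simp [prefixSum]

lemma prefixSum_eq_partialSum {f : Fin n → G} {z : ℕ → G} {j : ℕ} (hj : j ≤ n)
    (h : ∀ i : Fin n, (i : ℕ) < j → f i = z i) : prefixSum f j = partialSum z j := by
  refine sum_bij (fun i _ => i) (fun i hi => ?_) (fun _ _ _ _ => Fin.ext) (fun l hl => ?_)
    (fun i hi => h i (mem_filter.1 hi).2)
  · exact mem_range.2 (mem_filter.1 hi).2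
  · exact ⟨⟨l, (mem_range.1 hl).trans_le hj⟩, mem_filter.2 ⟨mem_univ _, mem_range.1 hl⟩, rfl⟩

variable [LinearOrder G] [IsOrderedAddMonoid G]

theorem sum_runningMax_prefixSum_comp_cycleRange_pow (f : Fin n → G) (i : Fin n) :
    ∑ r ∈ range (i + 1), (runningMax (prefixSum (f ∘ (Fin.cycleRange i ^ r))) (i + 1)
      - runningMax (prefixSum (f ∘ (Fin.cycleRange i ^ r))) i) = max 0 (prefixSum f (i + 1)) := by
  have hprefix (r j : ℕ) (hj : j ≤ i + 1) :
      prefixSum (f ∘ (Fin.cycleRange i ^ r)) j = partialSum (fun l => cyclicPrefix f i (r + l)) j :=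
    prefixSum_eq_partialSum (hj.trans i.2) fun l hl =>
      comp_cycleRange_pow_apply f (Fin.le_def.2 (Nat.lt_succ_iff.1 (hl.trans_le hj))) r
  have hf : prefixSum f (i + 1) = partialSum (cyclicPrefix f i) (i + 1) := by
    simpa using hprefix 0 (i + 1) le_rfl
  rw [hf, ← (periodic_cyclicPrefix f i).sum_runningMax_partialSum_shift_succ_sub]
  refine sum_congr rfl fun r _ => ?_
  rw [runningMax_congr fun j hj => hprefix r j hj,
    runningMax_congr fun j hj => hprefix r j (Nat.le_succ_of_le hj)]

theorem sum_perm_max_zero_prefixSum (x : Fin n → G) (i : Fin n) :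
    ∑ σ : Perm (Fin n), max 0 (prefixSum (x ∘ σ) (i + 1))
      = (i + 1 : ℕ) • ∑ σ : Perm (Fin n),
          (runningMax (prefixSum (x ∘ σ)) (i + 1) - runningMax (prefixSum (x ∘ σ)) i) := by
  calc ∑ σ : Perm (Fin n), max 0 (prefixSum (x ∘ σ) (i + 1))
      = ∑ σ : Perm (Fin n), ∑ r ∈ range (i + 1),
          (runningMax (prefixSum (x ∘ ⇑(σ * Fin.cycleRange i ^ r))) (i + 1)
            - runningMax (prefixSum (x ∘ ⇑(σ * Fin.cycleRange i ^ r))) i) :=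
        sum_congr rfl fun σ _ => (sum_runningMax_prefixSum_comp_cycleRange_pow (x ∘ σ) i).symm
    _ = ∑ r ∈ range (i + 1), ∑ σ : Perm (Fin n),
          (runningMax (prefixSum (x ∘ ⇑(σ * Fin.cycleRange i ^ r))) (i + 1)
            - runningMax (prefixSum (x ∘ ⇑(σ * Fin.cycleRange i ^ r))) i) := sum_comm
    _ = ∑ r ∈ range (i + 1), ∑ σ : Perm (Fin n),
          (runningMax (prefixSum (x ∘ σ)) (i + 1) - runningMax (prefixSum (x ∘ σ)) i) :=
        sum_congr rfl fun r _ =>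
          Fintype.sum_equiv (Equiv.mulRight (Fin.cycleRange i ^ r)) _ _ fun _ => rfl
    _ = _ := by rw [sum_const, card_range]

end Permutations

theorem dyson_hunt_kac (n : ℕ) (x : Fin n → ℝ) :
    ∑ σ : Equiv.Perm (Fin n),
      (Finset.range (n + 1)).sup' Finset.nonempty_range_add_one
        (fun j => ∑ i ∈ Finset.univ.filter (fun i : Fin n => (i : ℕ) < j), x (σ i))
    = ∑ k ∈ Finset.Icc 1 n, (1 / (k : ℝ)) *
        ∑ σ : Equiv.Perm (Fin n),
          max 0 (∑ i ∈ Finset.univ.filter (fun i : Fin n => (i : ℕ) < k), x (σ i)) := by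
  change ∑ σ : Perm (Fin n), runningMax (prefixSum (x ∘ σ)) n
    = ∑ k ∈ Icc 1 n, (1 / (k : ℝ)) * ∑ σ : Perm (Fin n), max 0 (prefixSum (x ∘ σ) k)
  rw [← Ico_add_one_right_eq_Icc, sum_Ico_eq_sum_range, Nat.add_sub_cancel]
  rw [Fintype.sum_congr _ _ fun σ : Perm (Fin n) => runningMax_eq_add_sum_sub (prefixSum (x ∘ σ)) n]
  simp only [prefixSum_zero, zero_add]
  rw [sum_comm]
  refine sum_congr rfl fun m hm => ?_
  rw [add_comm 1 m, sum_perm_max_zero_prefixSum x ⟨m, mem_range.1 hm⟩, nsmul_eq_mul]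
  field_simp
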